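/- arXiv:2110.02415 — 4 statements merged into one kernel-verified Lean document; each statement's English description precedes it below -/
import Mathlib

section
/- For a set S of at least 3 points in ℝ^d, every angle determined by three distinct points of S is at most π/3 if and only if all pairwise distances between points of S are equal. -/
/-!
Since the angles of a triangle sum to `π`, a triangle all of whose angles are at most `π / 3`
has all three angles equal to `π / 3`, so it is isosceles at every vertex. Hence, for each point
`x ∈ S`, all points of `S ∖ {x}` are equidistant from `x`, and chaining this through two fixed
points shows all pairwise distances agree. Conversely, the law of cosines gives `cos ∠ = 1 / 2`
in an equilateral triangle.
-/

open EuclideanGeometry Real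

theorem Set.exists_dist_eq_of_dist_eq_dist {α : Type*} [PseudoMetricSpace α] {s : Set α}
    (h : ∀ x ∈ s, ∀ y ∈ s, ∀ z ∈ s, x ≠ y → x ≠ z → dist x y = dist x z) :
    ∃ r : ℝ, ∀ x ∈ s, ∀ y ∈ s, x ≠ y → dist x y = r := by
  rcases s.subsingleton_or_nontrivial with hs | ⟨a, ha, b, hb, hab⟩
  · exact ⟨0, fun x hx y hy hxy => absurd (hs hx hy) hxy⟩
  refine ⟨dist a b, fun x hx y hy hxy => ?_⟩
  rcases eq_or_ne x a with rfl | hxa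
  · exact h x hx y hy b hb hxy hab
  calc dist x y = dist x a := h x hx y hy a ha hxy hxa
    _ = dist a x := dist_comm x a
    _ = dist a b := h a ha x hx b hb hxa.symm hab

section Triangle

variable {V P : Type*} [NormedAddCommGroup V] [InnerProductSpace ℝ V] [MetricSpace P]
  [NormedAddTorsor V P]

theorem EuclideanGeometry.dist_eq_dist_of_angles_le_pi_div_three {a b c : P} (hab : a ≠ b)
    (h₁ : ∠ a b c ≤ π / 3) (h₂ : ∠ b c a ≤ π / 3) (h₃ : ∠ c a b ≤ π / 3) :
    dist b a = dist b c := by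
  have hsum := angle_add_angle_add_angle_eq_pi c hab.symm
  apply dist_eq_of_angle_eq_angle_of_angle_ne_pi
  · rw [angle_comm]
    linarith
  · linarith [pi_pos]

theorem EuclideanGeometry.angle_eq_pi_div_three_of_dist_eq {a b c : P} (hab : a ≠ b)
    (h₁ : dist c b = dist a b) (h₂ : dist a c = dist a b) : ∠ a b c = π / 3 := by
  have hpos : 0 < dist a b := dist_pos.mpr hab
  have hcos : cos (∠ a b c) = cos (π / 3) := by
    have hlaw := law_cos a b c
    rw [h₁, h₂] at hlaw
    rw [cos_pi_div_three]
    nlinarith [mul_pos hpos hpos]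
  exact injOn_cos ⟨angle_nonneg a b c, angle_le_pi a b c⟩
    ⟨by positivity, by linarith [pi_pos]⟩ hcos

end Triangle

theorem stmt3_general (d : ℕ) (S : Finset (EuclideanSpace ℝ (Fin d))) :
    (∀ a ∈ S, ∀ b ∈ S, ∀ c ∈ S, a ≠ b → b ≠ c → a ≠ c →
        EuclideanGeometry.angle a b c ≤ Real.pi / 3) ↔
      (∃ r : ℝ, ∀ x ∈ S, ∀ y ∈ S, x ≠ y → dist x y = r) := by
  constructor
  · intro h
    refine Set.exists_dist_eq_of_dist_eq_dist fun x hx y hy z hz hxy hxz => ?_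
    rcases eq_or_ne y z with rfl | hyz
    · rfl
    exact dist_eq_dist_of_angles_le_pi_div_three hxy.symm (h y hy x hx z hz hxy.symm hxz hyz)
      (h x hx z hz y hy hxz hyz.symm hxy) (h z hz y hy x hx hyz.symm hxy.symm hxz.symm)
  · rintro ⟨r, hr⟩ a ha b hb c hc hab hbc hac
    refine (angle_eq_pi_div_three_of_dist_eq hab ?_ ?_).le
    · rw [hr c hc b hb hbc.symm, hr a ha b hb hab]
    · rw [hr a ha c hc hac, hr a ha b hb hab]

theorem stmt3 (d : ℕ) (S : Finset (EuclideanSpace ℝ (Fin d))) (hS : 3 ≤ S.card) :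
    (∀ a ∈ S, ∀ b ∈ S, ∀ c ∈ S, a ≠ b → b ≠ c → a ≠ c →
        EuclideanGeometry.angle a b c ≤ Real.pi / 3) ↔
      (∃ r : ℝ, ∀ x ∈ S, ∀ y ∈ S, x ≠ y → dist x y = r) :=
  stmt3_general d S
end

section
/- Fix c ∈ (0,1) and positive integers k ≤ d. There exists a family of k-element subsets F_1, ..., F_m of {1, ..., d} with pairwise intersections |F_i ∩ F_j| < ck for i ≠ j, and m ≥ C(d,k) / (Σ_{j=⌈ck⌉}^{k} C(k,j)·C(d-k, k-j)). -/
/-!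
Gilbert–Varshamov greedy argument: in a maximal family of `k`-sets with pairwise intersections
below `t = ⌈c k⌉`, every `k`-set meets some member in at least `t` points, since otherwise it
could be added. A `k`-set `A` meets at most `∑_{j ≥ t} C(k,j) C(d-k,k-j)` of the `k`-sets in at
least `t` points (choose `j` points of `A` and `k - j` outside it), so these "balls" around the
members of the family cover all `C(d,k)` of the `k`-sets.
-/

open Finset

theorem Finset.exists_pairwise_not_rel_card_le_mul {α : Type*} [DecidableEq α] (S : Finset α)
    (r : α → α → Prop) [DecidableRel r] (hsymm : ∀ a b, r a b → r b a)
    (hrefl : ∀ a ∈ S, r a a) (N : ℕ) (hball : ∀ a ∈ S, #{b ∈ S | r a b} ≤ N) :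
    ∃ G ⊆ S, (G : Set α).Pairwise (fun a b => ¬ r a b) ∧ #S ≤ #G * N := by
  classical
  obtain ⟨G, hG, hmax⟩ := exists_max_image
    (S.powerset.filter fun G : Finset α => (G : Set α).Pairwise fun a b => ¬ r a b) card
    ⟨∅, by simp⟩
  simp only [mem_filter, mem_powerset] at hG hmax
  obtain ⟨hGS, hGpair⟩ := hG
  have hcover : ∀ b ∈ S, ∃ a ∈ G, r a b := by
    intro b hb
    by_cases hbG : b ∈ G
    · exact ⟨b, hbG, hrefl b hb⟩
    by_contra! hfar
    have hins : ((insert b G : Finset α) : Set α).Pairwise (fun a b => ¬ r a b) := by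
      rw [coe_insert]
      exact hGpair.insert fun a ha _ => ⟨fun h => hfar a ha (hsymm _ _ h), hfar a ha⟩
    have := hmax (insert b G) ⟨insert_subset hb hGS, hins⟩
    rw [card_insert_of_notMem hbG] at this
    omega
  refine ⟨G, hGS, hGpair, ?_⟩
  calc #S ≤ #(G.biUnion fun a => {b ∈ S | r a b}) := card_le_card fun b hb => by
        obtain ⟨a, ha, hab⟩ := hcover b hb
        exact mem_biUnion.mpr ⟨a, ha, mem_filter.mpr ⟨hb, hab⟩⟩
    _ ≤ #G * N := card_biUnion_le_card_mul _ _ _ fun a ha => hball a (hGS ha)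

theorem Finset.card_filter_le_card_inter_le_sum_choose {α : Type*} [Fintype α]
    [DecidableEq α] (A : Finset α) (k t : ℕ) :
    #{B ∈ powersetCard k univ | t ≤ #(A ∩ B)} ≤
      ∑ j ∈ Icc t k, (#A).choose j * (Fintype.card α - #A).choose (k - j) := by
  calc #{B ∈ powersetCard k univ | t ≤ #(A ∩ B)}
      ≤ #((Icc t k).sigma fun j => powersetCard j A ×ˢ powersetCard (k - j) Aᶜ) := by
        refine card_le_card_of_injOn (fun B => ⟨#(B ∩ A), (B ∩ A, B \ A)⟩) ?_ ?_
        · intro B hB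
          simp only [coe_filter, mem_powersetCard, subset_univ, true_and, Set.mem_ofPred_eq] at hB
          have hsplit := card_sdiff_add_card_inter B A
          have hle : #(B ∩ A) ≤ #B := card_le_card inter_subset_left
          rw [inter_comm] at hB
          simp only [coe_sigma, Set.mem_sigma_iff, coe_Icc, Set.mem_Icc, coe_product,
            Set.mem_prod, mem_coe, mem_powersetCard]
          refine ⟨⟨hB.2, by omega⟩, ⟨inter_subset_right, trivial⟩,
            fun x hx => mem_compl.mpr (mem_sdiff.mp hx).2, by omega⟩
        · intro B _ B' _ h
          simp only [Sigma.mk.inj_iff, Prod.mk.injEq, heq_eq_eq] at h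
          rw [← sdiff_union_inter B A, ← sdiff_union_inter B' A, h.2.1, h.2.2]
    _ = ∑ j ∈ Icc t k, (#A).choose j * (Fintype.card α - #A).choose (k - j) := by
        simp only [card_sigma, card_product, card_powersetCard, card_compl]

theorem stmt4_general (d k : ℕ) (c : ℝ) (hc1 : c < 1) :
    ∃ (m : ℕ) (F : Fin m → Finset (Fin d)),
      (∀ i, (F i).card = k) ∧
      (∀ i j, i ≠ j → ((F i ∩ F j).card : ℝ) < c * k) ∧
      (m : ℝ) ≥ (d.choose k : ℝ) /
        (∑ j ∈ Finset.Icc ⌈c * k⌉₊ k, (k.choose j : ℝ) * ((d - k).choose (k - j)) : ℝ) := by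
  set t := ⌈c * k⌉₊
  set D := ∑ j ∈ Icc t k, k.choose j * (d - k).choose (k - j)
  have htk : t ≤ k := Nat.ceil_le.mpr (mul_le_of_le_one_left k.cast_nonneg hc1.le)
  have hD : 0 < D := lt_of_lt_of_le (by simp) (single_le_sum (fun j _ => Nat.zero_le _)
    (f := fun j => k.choose j * (d - k).choose (k - j)) (mem_Icc.mpr ⟨htk, le_rfl⟩))
  obtain ⟨G, hGS, hGpair, hGcard⟩ := exists_pairwise_not_rel_card_le_mul
    (powersetCard k (univ : Finset (Fin d))) (fun A B => t ≤ #(A ∩ B))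
    (fun A B h => by rwa [inter_comm]) (fun A hA => by simpa [(mem_powersetCard.mp hA).2])
    D (fun A hA => by
      simpa [(mem_powersetCard.mp hA).2] using
        card_filter_le_card_inter_le_sum_choose A k t)
  let e := G.equivFin.symm
  refine ⟨#G, fun i => e i, fun i => (mem_powersetCard.mp (hGS (e i).2)).2,
    fun i j hij => ?_, ?_⟩
  · have hne : (e i : Finset (Fin d)) ≠ e j := fun h => hij (e.injective (Subtype.ext h))
    exact Nat.lt_ceil.mp (not_le.mp (hGpair (e i).2 (e j).2 hne))
  · rw [card_powersetCard, card_univ, Fintype.card_fin] at hGcard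
    rw [ge_iff_le, div_le_iff₀ (by exact_mod_cast hD)]
    exact_mod_cast hGcard

theorem stmt4 (d k : ℕ) (hk : 1 ≤ k) (hkd : k ≤ d) (c : ℝ) (hc : 0 < c) (hc1 : c < 1) :
    ∃ (m : ℕ) (F : Fin m → Finset (Fin d)),
      (∀ i, (F i).card = k) ∧
      (∀ i j, i ≠ j → ((F i ∩ F j).card : ℝ) < c * k) ∧
      (m : ℝ) ≥ (d.choose k : ℝ) /
        (∑ j ∈ Finset.Icc ⌈c * k⌉₊ k, (k.choose j : ℝ) * ((d - k).choose (k - j)) : ℝ) :=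
  stmt4_general d k c hc1
end

section
/- Let S be a finite set of points in ℝ^d (|S| ≥ 3) such that every angle formed by three distinct points of S is less than π/3 + c, with 0 < c < 0.02, and suppose the maximum pairwise distance in S equals 1. Then every pairwise distance in S exceeds (1 - 1.744c)² > 1 - 3.488c. -/
/-!
Put `t = 1 - 1.744 c`. By the angle sum, every angle of a triangle in `S` also exceeds
`π/3 - 2c`, so by the law of sines the ratio of any two sides of such a triangle is
`sin A / sin B > sin (π/3 - 2c) / sin (π/3 + c) ≥ t`. If `dist u v = 1`, one application gives
`dist x u > t` for every `x ≠ u`, and a second one, in the triangle `u x y`, gives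
`dist x y > t * dist u x > t²`.
-/

open Real EuclideanGeometry

lemma one_sub_mul_sin_pi_div_three_add_le {c : ℝ} (hc : 0 ≤ c) (hc' : c < 0.02) :
    (1 - 1.744 * c) * sin (π / 3 + c) ≤ sin (π / 3 - 2 * c) := by
  have hs3 : √3 ^ 2 = 3 := sq_sqrt (by norm_num)
  have hs3_lower : (1.73205 : ℝ) ≤ √3 := by nlinarith [sqrt_nonneg 3]
  have hcos2 : 1 - (2 * c) ^ 2 / 2 ≤ cos (2 * c) := one_sub_sq_div_two_le_cos
  have hsin2 : sin (2 * c) ≤ 2 * c := sin_le (by linarith)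
  have hsin : sin c ≤ c := sin_le hc
  -- The fourth-order term matters: with `cos c ≤ 1` this chain only closes for `c < 0.012`.
  have hcos : cos c ≤ 1 - c ^ 2 / 2 + c ^ 4 * (5 / 96) := by
    have hb := cos_bound (x := c) (by rw [abs_of_nonneg hc]; linarith)
    rw [abs_of_nonneg hc] at hb
    linarith [(abs_le.1 hb).2]
  rw [sin_sub, sin_add, sin_pi_div_three, cos_pi_div_three]
  have ht : 0 ≤ 1 - 1.744 * c := by linarith
  calc (1 - 1.744 * c) * (√3 / 2 * cos c + 1 / 2 * sin c)
      ≤ (1 - 1.744 * c) * (√3 / 2 * (1 - c ^ 2 / 2 + c ^ 4 * (5 / 96)) + 1 / 2 * c) := by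
        gcongr
    _ ≤ √3 / 2 * (1 - (2 * c) ^ 2 / 2) - 1 / 2 * (2 * c) := by
        nlinarith [mul_nonneg (mul_nonneg hc hc) (sub_nonneg.2 hc'.le),
          mul_nonneg hc (sub_nonneg.2 hc'.le),
          mul_nonneg (mul_nonneg (mul_nonneg hc hc) hc) (sub_nonneg.2 hc'.le),
          mul_nonneg (mul_nonneg hc hc) (mul_nonneg hc hc),
          mul_nonneg hc (sub_nonneg.2 hs3_lower)]
    _ ≤ √3 / 2 * cos (2 * c) - 1 / 2 * sin (2 * c) := by gcongr

lemma one_sub_mul_sin_lt_sin {c A B : ℝ} (hc : 0 ≤ c) (hc' : c < 0.02)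
    (hA : π / 3 - 2 * c < A) (hA' : A < π / 3 + c) (hB : 0 ≤ B) (hB' : B < π / 3 + c) :
    (1 - 1.744 * c) * sin B < sin A := by
  have hπ := pi_gt_three
  have hπ' := pi_lt_d2
  have hsinB : sin B < sin (π / 3 + c) := sin_lt_sin_of_lt_of_le_pi_div_two (by linarith)
    (by linarith) hB'
  have hsinA : sin (π / 3 - 2 * c) < sin A := sin_lt_sin_of_lt_of_le_pi_div_two (by linarith)
    (by linarith) hA
  calc (1 - 1.744 * c) * sin B ≤ (1 - 1.744 * c) * sin (π / 3 + c) := by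
        gcongr
        linarith
    _ ≤ sin (π / 3 - 2 * c) := one_sub_mul_sin_pi_div_three_add_le hc hc'
    _ < sin A := hsinA

section Triangle

variable {V P : Type*} [NormedAddCommGroup V] [InnerProductSpace ℝ V] [MetricSpace P]
  [NormedAddTorsor V P]

lemma pi_sub_two_mul_lt_angle {p₁ p₂ p₃ : P} {β : ℝ} (h : p₂ ≠ p₁)
    (h₂ : ∠ p₂ p₃ p₁ < β) (h₃ : ∠ p₃ p₁ p₂ < β) : π - 2 * β < ∠ p₁ p₂ p₃ := by
  linarith [angle_add_angle_add_angle_eq_pi p₃ h]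

lemma mul_dist_lt_dist_of_mul_sin_lt {a b e : P} {t : ℝ} (hae : a ≠ e)
    (h : t * sin (∠ a b e) < sin (∠ b a e)) : t * dist a e < dist b e := by
  have hsin : sin (∠ a b e) * dist b e = sin (∠ b a e) * dist a e := by
    rw [law_sin, angle_comm e, dist_comm e]
  have hpos : 0 < dist a e := dist_pos.2 hae
  refine lt_of_mul_lt_mul_left ?_ (sin_nonneg_of_nonneg_of_le_pi (angle_nonneg a b e)
    (angle_le_pi a b e))
  calc sin (∠ a b e) * (t * dist a e) = t * sin (∠ a b e) * dist a e := by ring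
    _ < sin (∠ b a e) * dist a e := by gcongr
    _ = sin (∠ a b e) * dist b e := hsin.symm

lemma one_sub_mul_dist_lt_dist {S : Set P} {c : ℝ} (hc : 0 ≤ c) (hc' : c < 0.02)
    (hang : ∀ a ∈ S, ∀ b ∈ S, ∀ e ∈ S, a ≠ b → b ≠ e → a ≠ e → ∠ a b e < π / 3 + c)
    {a b e : P} (ha : a ∈ S) (hb : b ∈ S) (he : e ∈ S) (hab : a ≠ b) (hbe : b ≠ e)
    (hae : a ≠ e) : (1 - 1.744 * c) * dist a e < dist b e := by
  have hA : π / 3 - 2 * c < ∠ b a e := by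
    have := pi_sub_two_mul_lt_angle hab (hang a ha e he b hb hae hbe.symm hab)
      (hang e he b hb a ha hbe.symm hab.symm hae.symm)
    linarith
  exact mul_dist_lt_dist_of_mul_sin_lt hae <| one_sub_mul_sin_lt_sin hc hc' hA
    (hang b hb a ha e he hab.symm hae hbe) (angle_nonneg a b e) (hang a ha b hb e he hab hbe hae)

end Triangle

theorem stmt13_general (d : ℕ) (S : Finset (EuclideanSpace ℝ (Fin d)))
    (c : ℝ) (hc : 0 < c) (hc' : c < 0.02)
    (hang : ∀ a ∈ S, ∀ b ∈ S, ∀ e ∈ S, a ≠ b → b ≠ e → a ≠ e →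
      EuclideanGeometry.angle a b e < Real.pi / 3 + c)
    (hmax : ∃ x ∈ S, ∃ y ∈ S, dist x y = 1) :
    (∀ x ∈ S, ∀ y ∈ S, x ≠ y → dist x y > (1 - 1.744 * c) ^ 2) ∧
      (1 - 1.744 * c) ^ 2 > 1 - 3.488 * c := by
  set t := 1 - 1.744 * c with ht_def
  have ht : 0 < t := by linarith
  have ht_sq : t ^ 2 < t := by nlinarith
  have hratio {a b e} (ha : a ∈ S) (hb : b ∈ S) (he : e ∈ S) :=
    one_sub_mul_dist_lt_dist (S := (S : Set (EuclideanSpace ℝ (Fin d)))) hc.le hc' hang ha hb he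
  obtain ⟨u, hu, v, hv, huv⟩ := hmax
  have hvu : v ≠ u := by rintro rfl; simp at huv
  have hfar : ∀ z ∈ S, z ≠ u → t < dist z u := by
    intro z hz hzu
    rcases eq_or_ne v z with rfl | hvz
    · linarith [dist_comm u v]
    · simpa [dist_comm v u, huv] using hratio hv hz hu hvz hzu hvu
  refine ⟨fun x hx y hy hxy => ?_, by nlinarith⟩
  rcases eq_or_ne x u with rfl | hxu
  · linarith [hfar y hy hxy.symm, dist_comm x y]
  rcases eq_or_ne y u with rfl | hyu
  · linarith [hfar x hx hxu]
  calc t ^ 2 = t * t := sq t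
    _ < t * dist u x := by gcongr; rw [dist_comm]; exact hfar x hx hxu
    _ < dist y x := hratio hu hy hx hyu.symm hxy.symm hxu.symm
    _ = dist x y := dist_comm y x

theorem stmt13 (d : ℕ) (S : Finset (EuclideanSpace ℝ (Fin d))) (hS : 3 ≤ S.card)
    (c : ℝ) (hc : 0 < c) (hc' : c < 0.02)
    (hang : ∀ a ∈ S, ∀ b ∈ S, ∀ e ∈ S, a ≠ b → b ≠ e → a ≠ e →
      EuclideanGeometry.angle a b e < Real.pi / 3 + c)
    (hdiam : ∀ x ∈ S, ∀ y ∈ S, dist x y ≤ 1)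
    (hmax : ∃ x ∈ S, ∃ y ∈ S, dist x y = 1) :
    (∀ x ∈ S, ∀ y ∈ S, x ≠ y → dist x y > (1 - 1.744 * c) ^ 2) ∧
      (1 - 1.744 * c) ^ 2 > 1 - 3.488 * c :=
  stmt13_general d S c hc hc' hang hmax
end

section
/- Define H(a,b) = -ab·log a - 2(1-a)·log(1-a) + ab·log b + 2a(1-b)·log(1-b) + (1-2a+ab)·log(1-2a+ab) for 0 < a < 1/2 and b ∈ (0,1). Fix a ∈ (0,1). Then the partial derivative ∂H/∂b = -a·log a + a·log b - 2a·log(1-b) + a·log(1-2a+ab) is increasing in b and vanishes at b = a; consequently, for c ≥ a, H(a,b) ≥ H(a,c) for all b ∈ [c, 1). -/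
noncomputable def H (a b : ℝ) : ℝ :=
  -(a * b) * Real.log a - 2 * (1 - a) * Real.log (1 - a) + a * b * Real.log b +
    2 * a * (1 - b) * Real.log (1 - b) + (1 - 2 * a + a * b) * Real.log (1 - 2 * a + a * b)

noncomputable def Hb (a b : ℝ) : ℝ :=
  -a * Real.log a + a * Real.log b - 2 * a * Real.log (1 - b) +
    a * Real.log (1 - 2 * a + a * b)

open Real Set

lemma one_sub_two_mul_add_mul_pos {a b : ℝ} (ha : 0 ≤ a) (ha' : a < 1 / 2) (hb : 0 ≤ b) :
    0 < 1 - 2 * a + a * b := by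
  nlinarith [mul_nonneg ha hb]

lemma hasDerivAt_H {a b : ℝ} (hb : b ≠ 0) (hb' : 1 - b ≠ 0) (hab : 1 - 2 * a + a * b ≠ 0) :
    HasDerivAt (H a) (Hb a b) b := by
  have hlin : HasDerivAt (fun t : ℝ => 1 - 2 * a + a * t) a b := by
    simpa using ((hasDerivAt_id b).const_mul a).const_add (1 - 2 * a)
  have hsub : HasDerivAt (fun t : ℝ => 1 - t) (-1) b := by
    simpa using (hasDerivAt_id b).const_sub 1
  have key := (((((hasDerivAt_id b).const_mul (-(a * log a))).sub_const
      (2 * (1 - a) * log (1 - a))).add ((hasDerivAt_mul_log hb).const_mul a)).add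
      (((hasDerivAt_mul_log hb').comp b hsub).const_mul (2 * a))).add
      ((hasDerivAt_mul_log hab).comp b hlin)
  refine (key.congr_deriv (by simp only [Hb]; ring)).congr_of_eventuallyEq
    (Filter.Eventually.of_forall fun t => ?_)
  simp only [H, Pi.add_apply, Function.comp_apply, id_eq]
  ring

lemma Hb_strictMonoOn {a : ℝ} (ha : 0 < a) (ha' : a < 1 / 2) : StrictMonoOn (Hb a) (Ioo 0 1) := by
  intro x hx y hy hxy
  have hx' := one_sub_two_mul_add_mul_pos ha.le ha' hx.1.le
  have h1 : log x < log y := log_lt_log hx.1 hxy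
  have h2 : log (1 - y) < log (1 - x) := log_lt_log (by linarith [hy.2]) (by linarith)
  have h3 : log (1 - 2 * a + a * x) < log (1 - 2 * a + a * y) :=
    log_lt_log hx' (by nlinarith)
  simp only [Hb]
  linarith [mul_lt_mul_of_pos_left h1 ha, mul_lt_mul_of_pos_left h2 ha,
    mul_lt_mul_of_pos_left h3 ha]

lemma Hb_self (a : ℝ) : Hb a a = 0 := by
  have hsq : 1 - 2 * a + a * a = (1 - a) ^ 2 := by ring
  simp only [Hb, hsq, log_pow]
  push_cast
  ring

lemma H_monotoneOn_Ico {a : ℝ} (ha : 0 < a) (ha' : a < 1 / 2) : MonotoneOn (H a) (Ico a 1) := by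
  have hderiv : ∀ x ∈ Ico a 1, HasDerivAt (H a) (Hb a x) x := fun x hx =>
    hasDerivAt_H (by linarith [hx.1]) (by linarith [hx.2])
      (one_sub_two_mul_add_mul_pos ha.le ha' (by linarith [hx.1])).ne'
  refine monotoneOn_of_hasDerivWithinAt_nonneg (convex_Ico a 1)
    (fun x hx => (hderiv x hx).continuousAt.continuousWithinAt)
    (fun x hx => (hderiv x (interior_subset hx)).hasDerivWithinAt) fun x hx => ?_
  rw [interior_Ico] at hx
  have := Hb_strictMonoOn ha ha' ⟨ha, by linarith⟩ ⟨by linarith [hx.1], hx.2⟩ hx.1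
  linarith [Hb_self a]

theorem stmt19 (a : ℝ) (ha : 0 < a) (ha' : a < 1 / 2) :
    (∀ b ∈ Set.Ioo (0 : ℝ) 1, HasDerivAt (fun t => H a t) (Hb a b) b) ∧
      StrictMonoOn (Hb a) (Set.Ioo (0 : ℝ) 1) ∧
      Hb a a = 0 ∧
      ∀ c : ℝ, a ≤ c → c < 1 → ∀ b ∈ Set.Ico c 1, H a b ≥ H a c := by
  refine ⟨fun b hb => ?_, Hb_strictMonoOn ha ha', Hb_self a, fun c hac hc b hb => ?_⟩
  · exact hasDerivAt_H hb.1.ne' (by linarith [hb.2])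
      (one_sub_two_mul_add_mul_pos ha.le ha' hb.1.le).ne'
  · exact H_monotoneOn_Ico ha ha' ⟨hac, hc⟩ ⟨hac.trans hb.1, hb.2⟩ hb.1
end
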